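/- Suppose additionally that μ > 0 and the constant step size satisfies α ≤ 2/L. Define R_{i,k} = ⟨∇F(x_i^k) − ∇f(x_i^k; σ_k(i+1)), x_i^k − x*⟩. Then for every epoch k and every 0 ≤ i ≤ n−1, E[R_{i,k}] ≤ 4L²G²α²/μ + (μ/4)·E[‖x_i^k − x*‖²] + 2αG². -/

import Mathlib

open Finset MeasureTheory ProbabilityTheory RealInnerProductSpace

noncomputable section

abbrev Vec (d : ℕ) : Type := EuclideanSpace ℝ (Fin d)

/-- The objective `F(x) = (1/n) ∑ i, f(x; i)`. -/
def avgF {d n : ℕ} (f : Fin n → Vec d → ℝ) : Vec d → ℝ :=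
  fun x => (∑ i, f i x) / n

/-- SGDo iterates with constant step size `α`, flattened over epochs:
`σ j` is the permutation used during epoch `j + 1`, and at total step `t`
(the `t % n`-th step of epoch `t / n + 1`) we take a gradient step on the
component selected by the permutation of the current epoch. -/
def sgdoSeq {d n : ℕ} (hn : 0 < n) (f : Fin n → Vec d → ℝ) (α : ℝ)
    (x0 : Vec d) (σ : ℕ → Equiv.Perm (Fin n)) : ℕ → Vec d
  | 0 => x0
  | t + 1 =>
      sgdoSeq hn f α x0 σ t
        - α • gradient (f (σ (t / n) ⟨t % n, Nat.mod_lt t hn⟩)) (sgdoSeq hn f α x0 σ t)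

/-- `x_i^k`, for epoch `k ≥ 1` and within-epoch index `0 ≤ i ≤ n`. -/
def sgdoIter {d n : ℕ} (hn : 0 < n) (f : Fin n → Vec d → ℝ) (α : ℝ)
    (x0 : Vec d) (σ : ℕ → Equiv.Perm (Fin n)) (k i : ℕ) : Vec d :=
  sgdoSeq hn f α x0 σ ((k - 1) * n + i)

/-- Extend a `K`-tuple of permutations to `ℕ` (junk value beyond `K`). -/
def extendPerm {n K : ℕ} (ω : Fin K → Equiv.Perm (Fin n)) : ℕ → Equiv.Perm (Fin n) :=
  fun j => if h : j < K then ω ⟨j, h⟩ else 1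

/-- Expectation of `g` under the uniform distribution on a finite type. -/
def unifExp {Ω : Type*} [Fintype Ω] (g : Ω → ℝ) : ℝ :=
  (∑ ω, g ω) / (Fintype.card Ω)

instance permMeasurableSpace {n : ℕ} : MeasurableSpace (Equiv.Perm (Fin n)) := ⊤

/-- The uniform probability measure on a finite type. -/
def unifMeasure (Ω : Type*) [MeasurableSpace Ω] [Fintype Ω] [Nonempty Ω] : Measure Ω :=
  (PMF.uniformOfFintype Ω).toMeasure

/-- Wasserstein-1 distance between measures on `ℝ^d`, as an infimum over couplings. -/
def W1dist {d : ℕ} (P Q : Measure (Vec d)) : ℝ :=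
  sInf { c | ∃ μ : Measure (Vec d × Vec d), IsProbabilityMeasure μ ∧
    μ.map Prod.fst = P ∧ μ.map Prod.snd = Q ∧ c = ∫ p, ‖p.1 - p.2‖ ∂μ }

/-- Wasserstein-2 distance between measures on `ℝ^d`, as an infimum over couplings. -/
def W2dist {d : ℕ} (P Q : Measure (Vec d)) : ℝ :=
  sInf { c | ∃ μ : Measure (Vec d × Vec d), IsProbabilityMeasure μ ∧
    μ.map Prod.fst = P ∧ μ.map Prod.snd = Q ∧ c = Real.sqrt (∫ p, ‖p.1 - p.2‖ ^ 2 ∂μ) }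

open InnerProductSpace

section AuxLemmas

variable {d n : ℕ}

lemma line_hasDerivAt (g : Vec d → ℝ) (hg : Differentiable ℝ g) (x v : Vec d) (t : ℝ) :
    HasDerivAt (fun s : ℝ => g (x + s • v)) ⟪gradient g (x + t • v), v⟫ t := by
  have hψ : HasDerivAt (fun s : ℝ => x + s • v) v t := by
    simpa using ((hasDerivAt_id t).smul_const v).const_add x
  have hfd : HasFDerivAt g (toDual ℝ (Vec d) (gradient g (x + t • v))) (x + t • v) :=
    (hg (x + t • v)).hasGradientAt.hasFDerivAt
  have := hfd.comp_hasDerivAt t hψ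
  simpa [toDual_apply_apply, Function.comp_def] using this

lemma convex_first_order (g : Vec d → ℝ) (hg : Differentiable ℝ g)
    (hconv : ConvexOn ℝ Set.univ g) (x y : Vec d) :
    g x + ⟪gradient g x, y - x⟫ ≤ g y := by
  set v := y - x with hv
  set φ : ℝ → ℝ := fun s => g (x + s • v) with hφ
  have hφconv : ConvexOn ℝ Set.univ φ := by
    refine ⟨convex_univ, fun a _ b _ p q hp hq hpq => ?_⟩
    have hE : x + (p * a + q * b) • v = p • (x + a • v) + q • (x + b • v) := by
      rw [smul_add, smul_add, add_add_add_comm, ← add_smul, hpq, one_smul]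
      rw [smul_smul, smul_smul, ← add_smul]
    simp only [hφ, smul_eq_mul, hE]
    exact hconv.2 (Set.mem_univ _) (Set.mem_univ _) hp hq hpq
  have hder : HasDerivAt φ ⟪gradient g x, v⟫ 0 := by
    simpa using line_hasDerivAt g hg x v 0
  have hslope := hφconv.deriv_le_slope (Set.mem_univ (0:ℝ)) (Set.mem_univ (1:ℝ))
    one_pos (hder.differentiableAt)
  rw [hder.deriv] at hslope
  have h1 : slope φ 0 1 = g y - g x := by simp [slope, φ, v]
  rw [h1] at hslope
  linarith

lemma gradient_continuous (g : Vec d → ℝ) (L : ℝ)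
    (hL : ∀ a b, ‖gradient g a - gradient g b‖ ≤ L * ‖a - b‖) :
    Continuous fun z => gradient g z := by
  refine (LipschitzWith.of_dist_le_mul (K := Real.toNNReal L) fun a b => ?_).continuous
  have h1 := hL a b
  have h2 : L * ‖a - b‖ ≤ Real.toNNReal L * ‖a - b‖ :=
    mul_le_mul_of_nonneg_right (Real.le_coe_toNNReal L) (norm_nonneg _)
  calc dist (gradient g a) (gradient g b) = ‖gradient g a - gradient g b‖ := dist_eq_norm _ _
    _ ≤ L * ‖a - b‖ := h1
    _ ≤ Real.toNNReal L * ‖a - b‖ := h2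
    _ = Real.toNNReal L * dist a b := by rw [dist_eq_norm]

lemma descent_lemma (g : Vec d → ℝ) (L : ℝ) (hg : Differentiable ℝ g)
    (hL : ∀ a b, ‖gradient g a - gradient g b‖ ≤ L * ‖a - b‖) (x y : Vec d) :
    g y ≤ g x + ⟪gradient g x, y - x⟫ + L / 2 * ‖y - x‖ ^ 2 := by
  set v := y - x with hv
  set φ' : ℝ → ℝ := fun t => ⟪gradient g (x + t • v), v⟫ with hφ'
  have hcont : Continuous φ' := by
    have h1 : Continuous fun t : ℝ => gradient g (x + t • v) :=
      (gradient_continuous g L hL).comp (continuous_const.add (continuous_id.smul continuous_const))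
    exact h1.inner continuous_const
  have hint : ∀ t ∈ Set.uIcc (0:ℝ) 1, HasDerivAt (fun s : ℝ => g (x + s • v)) (φ' t) t :=
    fun t _ => line_hasDerivAt g hg x v t
  have hI : IntervalIntegrable φ' MeasureTheory.volume 0 1 := hcont.intervalIntegrable 0 1
  have hFTC := intervalIntegral.integral_eq_sub_of_hasDerivAt hint hI
  have hval : g y - g x = ∫ t in (0:ℝ)..1, φ' t := by
    rw [hFTC]; simp [v]
  have hub : ∀ t ∈ Set.Icc (0:ℝ) 1, φ' t ≤ ⟪gradient g x, v⟫ + L * ‖v‖ ^ 2 * t := by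
    rintro t ⟨ht0, ht1⟩
    have h1 : φ' t - ⟪gradient g x, v⟫ = ⟪gradient g (x + t • v) - gradient g x, v⟫ := by
      rw [inner_sub_left]
    have h2 : ⟪gradient g (x + t • v) - gradient g x, v⟫ ≤ L * (t * ‖v‖) * ‖v‖ := by
      calc ⟪gradient g (x + t • v) - gradient g x, v⟫
          ≤ ‖gradient g (x + t • v) - gradient g x‖ * ‖v‖ := real_inner_le_norm _ _
        _ ≤ L * ‖x + t • v - x‖ * ‖v‖ := by
            apply mul_le_mul_of_nonneg_right _ (norm_nonneg _)
            exact hL _ _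
        _ = L * (t * ‖v‖) * ‖v‖ := by
            rw [add_sub_cancel_left, norm_smul, Real.norm_eq_abs, abs_of_nonneg ht0]
    nlinarith [h1, h2]
  have hIub : IntervalIntegrable (fun t => ⟪gradient g x, v⟫ + L * ‖v‖ ^ 2 * t)
      MeasureTheory.volume 0 1 :=
    (continuous_const.add (continuous_const.mul continuous_id')).intervalIntegrable 0 1
  have hmono := intervalIntegral.integral_mono_on (le_refl (0:ℝ) |>.trans zero_le_one) hI hIub hub
  have hcomp : (∫ t in (0:ℝ)..1, (⟪gradient g x, v⟫ + L * ‖v‖ ^ 2 * t))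
      = ⟪gradient g x, v⟫ + L / 2 * ‖v‖ ^ 2 := by
    rw [intervalIntegral.integral_add (f := fun _ => ⟪gradient g x, v⟫) (g := fun t => L * ‖v‖ ^ 2 * t) (continuous_const.intervalIntegrable 0 1)
      ((continuous_const.mul continuous_id').intervalIntegrable 0 1)]
    rw [intervalIntegral.integral_const_mul, integral_id]
    simp
    ring
  rw [hcomp] at hmono
  linarith [hval ▸ hmono]

lemma shifted_hasGradient (g : Vec d → ℝ) (hg : Differentiable ℝ g) (w z : Vec d) :
    HasGradientAt (fun u => g u - ⟪w, u⟫) (gradient g z - w) z := by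
  have h1 : HasFDerivAt g (toDual ℝ (Vec d) (gradient g z)) z :=
    (hg z).hasGradientAt.hasFDerivAt
  have h2 : HasFDerivAt (fun u : Vec d => ⟪w, u⟫) (innerSL ℝ w) z :=
    (innerSL ℝ w).hasFDerivAt
  have h3 := h1.sub h2
  have he : toDual ℝ (Vec d) (gradient g z) - innerSL ℝ w
      = toDual ℝ (Vec d) (gradient g z - w) := by
    ext u
    simp [inner_sub_left]
  rw [he] at h3
  simpa only [LinearIsometryEquiv.symm_apply_apply, Pi.sub_def] using h3.hasGradientAt

lemma shifted_props (g : Vec d → ℝ) (L : ℝ) (hg : Differentiable ℝ g)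
    (hL : ∀ a b, ‖gradient g a - gradient g b‖ ≤ L * ‖a - b‖) (w : Vec d) :
    Differentiable ℝ (fun u => g u - ⟪w, u⟫) ∧
    (∀ z, gradient (fun u => g u - ⟪w, u⟫) z = gradient g z - w) ∧
    (∀ a b, ‖gradient (fun u => g u - ⟪w, u⟫) a - gradient (fun u => g u - ⟪w, u⟫) b‖
        ≤ L * ‖a - b‖) := by
  have hgr : ∀ z, gradient (fun u => g u - ⟪w, u⟫) z = gradient g z - w :=
    fun z => (shifted_hasGradient g hg w z).gradient
  refine ⟨fun z => (shifted_hasGradient g hg w z).differentiableAt, hgr, fun a b => ?_⟩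
  rw [hgr, hgr]
  simpa using hL a b

lemma cocoercivity (g : Vec d → ℝ) (L : ℝ) (hLpos : 0 < L)
    (hg : Differentiable ℝ g) (hconv : ConvexOn ℝ Set.univ g)
    (hL : ∀ a b, ‖gradient g a - gradient g b‖ ≤ L * ‖a - b‖) (x y : Vec d) :
    (1 / L) * ‖gradient g x - gradient g y‖ ^ 2 ≤ ⟪gradient g x - gradient g y, x - y⟫ := by
  -- key one-sided bound
  have key : ∀ a b : Vec d, (1 / (2 * L)) * ‖gradient g b - gradient g a‖ ^ 2
      ≤ g b - g a - ⟪gradient g a, b - a⟫ := by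
    intro a b
    set h : Vec d → ℝ := fun u => g u - ⟪gradient g a, u⟫ with hh
    obtain ⟨hdiff, hgr, hlip⟩ := shifted_props g L hg hL (gradient g a)
    have hconvh : ConvexOn ℝ Set.univ h := by
      refine ⟨convex_univ, fun u _ v _ p q hp hq hpq => ?_⟩
      have := hconv.2 (Set.mem_univ u) (Set.mem_univ v) hp hq hpq
      simp only [smul_eq_mul] at this
      simp only [hh, smul_eq_mul]
      rw [inner_add_right, real_inner_smul_right, real_inner_smul_right]
      linarith [this]
    -- a is a global min of h
    have hmin : ∀ z, h a ≤ h z := by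
      intro z
      have := convex_first_order h hdiff hconvh a z
      rw [hgr a] at this
      simpa using this
    -- descent step from b
    have hdesc := descent_lemma h L hdiff hlip b (b - (1 / L) • gradient h b)
    have hgb : gradient h b = gradient g b - gradient g a := hgr b
    have hsub : b - (1 / L) • gradient h b - b = -((1 / L) • gradient h b) := by abel
    rw [hsub] at hdesc
    have hinner : ⟪gradient h b, -((1 / L) • gradient h b)⟫ = -(1 / L) * ‖gradient h b‖ ^ 2 := by
      rw [inner_neg_right, real_inner_smul_right, real_inner_self_eq_norm_sq]
      ring
    have hnorm : ‖-((1 / L) • gradient h b)‖ ^ 2 = (1 / L) ^ 2 * ‖gradient h b‖ ^ 2 := by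
      rw [norm_neg, norm_smul, mul_pow, Real.norm_eq_abs, sq_abs]
    rw [hinner, hnorm] at hdesc
    have hLne : L ≠ 0 := ne_of_gt hLpos
    have hch : h b - h a ≥ (1 / (2 * L)) * ‖gradient h b‖ ^ 2 := by
      have h2 := (hmin (b - (1 / L) • gradient h b)).trans hdesc
      have he : -(1 / L) * ‖gradient h b‖ ^ 2 + L / 2 * ((1 / L) ^ 2 * ‖gradient h b‖ ^ 2)
          = -((1 / (2 * L)) * ‖gradient h b‖ ^ 2) := by
        field_simp
        ring
      linarith [h2, he]
    have hhb : h b - h a = g b - g a - ⟪gradient g a, b - a⟫ := by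
      simp only [hh]
      rw [inner_sub_right]
      ring
    rw [hgb] at hch
    linarith [hhb ▸ hch]
  have k1 := key x y
  have k2 := key y x
  have hxy : ‖gradient g x - gradient g y‖ = ‖gradient g y - gradient g x‖ := by
    rw [← norm_neg]; congr 1; abel
  have hi : ⟪gradient g y, x - y⟫ = -⟪gradient g y, y - x⟫ := by
    rw [← inner_neg_right]; congr 1; abel
  have hsum : (1 / L) * ‖gradient g x - gradient g y‖ ^ 2
      ≤ - ⟪gradient g x, y - x⟫ - ⟪gradient g y, x - y⟫ := by
    rw [hxy] at k2 ⊢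
    have hL0 : L ≠ 0 := ne_of_gt hLpos
    have e : (1 / L) * ‖gradient g y - gradient g x‖ ^ 2
        = 1 / (2 * L) * ‖gradient g y - gradient g x‖ ^ 2
          + 1 / (2 * L) * ‖gradient g y - gradient g x‖ ^ 2 := by
      field_simp
      ring
    linarith [k1, k2, e]
  have hfin : - ⟪gradient g x, y - x⟫ - ⟪gradient g y, x - y⟫
      = ⟪gradient g x - gradient g y, x - y⟫ := by
    rw [inner_sub_left]
    have : ⟪gradient g x, y - x⟫ = -⟪gradient g x, x - y⟫ := by
      rw [← inner_neg_right]; congr 1; abel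
    rw [this]
    ring
  linarith [hfin ▸ hsum]

lemma step_nonexpansive (g : Vec d → ℝ) (L α : ℝ) (hLpos : 0 < L)
    (hα : 0 ≤ α) (hα2 : α ≤ 2 / L)
    (hg : Differentiable ℝ g) (hconv : ConvexOn ℝ Set.univ g)
    (hL : ∀ a b, ‖gradient g a - gradient g b‖ ≤ L * ‖a - b‖) (x y : Vec d) :
    ‖(x - α • gradient g x) - (y - α • gradient g y)‖ ≤ ‖x - y‖ := by
  set u := x - y with hu
  set w := gradient g x - gradient g y with hw
  have hco := cocoercivity g L hLpos hg hconv hL x y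
  have hvec : (x - α • gradient g x) - (y - α • gradient g y) = u - α • w := by
    simp only [hu, hw, smul_sub]; abel
  rw [hvec]
  have hsq : ‖u - α • w‖ ^ 2 = ‖u‖ ^ 2 - 2 * (α * ⟪u, w⟫) + α ^ 2 * ‖w‖ ^ 2 := by
    rw [norm_sub_sq_real, real_inner_smul_right, norm_smul, mul_pow, Real.norm_eq_abs, sq_abs]
  have hiuw : ⟪u, w⟫ = ⟪w, u⟫ := real_inner_comm _ _
  have h1 : (1 / L) * ‖w‖ ^ 2 ≤ ⟪u, w⟫ := by rw [hiuw]; exact hco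
  have h2 : α * (α - 2 / L) ≤ 0 := by
    apply mul_nonpos_of_nonneg_of_nonpos hα
    linarith
  have m1 : α * ((1 / L) * ‖w‖ ^ 2) ≤ α * ⟪u, w⟫ := mul_le_mul_of_nonneg_left h1 hα
  have m2 : α * (α - 2 / L) * ‖w‖ ^ 2 ≤ 0 :=
    mul_nonpos_iff.mpr (Or.inr ⟨h2, sq_nonneg _⟩)
  have e1 : α * (α - 2 / L) * ‖w‖ ^ 2 = α ^ 2 * ‖w‖ ^ 2 - 2 * (α * ((1 / L) * ‖w‖ ^ 2)) := by
    ring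
  have hfin : ‖u - α • w‖ ^ 2 ≤ ‖u‖ ^ 2 := by linarith [hsq, m1, m2, e1]
  have hs := Real.sqrt_le_sqrt hfin
  rwa [Real.sqrt_sq (norm_nonneg _), Real.sqrt_sq (norm_nonneg _)] at hs

lemma gradient_avgF (f : Fin n → Vec d → ℝ) (hdiff : ∀ i, Differentiable ℝ (f i)) (x : Vec d) :
    gradient (avgF f) x = (n : ℝ)⁻¹ • ∑ j, gradient (f j) x := by
  have hsum : HasFDerivAt (fun y => ∑ j, f j y)
      (∑ j, toDual ℝ (Vec d) (gradient (f j) x)) x :=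
    HasFDerivAt.fun_sum (fun j _ => ((hdiff j) x).hasGradientAt.hasFDerivAt)
  have havg : HasFDerivAt (avgF f)
      ((n : ℝ)⁻¹ • ∑ j, toDual ℝ (Vec d) (gradient (f j) x)) x := by
    have : avgF f = fun y => (n : ℝ)⁻¹ • ∑ j, f j y := by
      funext y; simp [avgF, div_eq_inv_mul]
    rw [this]
    exact hsum.const_smul ((n:ℝ)⁻¹)
  have he : (n : ℝ)⁻¹ • ∑ j, toDual ℝ (Vec d) (gradient (f j) x)
      = toDual ℝ (Vec d) ((n : ℝ)⁻¹ • ∑ j, gradient (f j) x) := by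
    rw [_root_.map_smul, map_sum]
  rw [he] at havg
  simpa only [LinearIsometryEquiv.symm_apply_apply] using havg.hasGradientAt.gradient

/-- Two driving sequences that select the same components up to time `T` give equal iterates. -/

lemma sgdoSeq_congr (hn : 0 < n) (f : Fin n → Vec d → ℝ) (α : ℝ) (x0 : Vec d)
    (σ σ' : ℕ → Equiv.Perm (Fin n)) (T : ℕ)
    (h : ∀ t, t < T → σ (t / n) ⟨t % n, Nat.mod_lt t hn⟩ = σ' (t / n) ⟨t % n, Nat.mod_lt t hn⟩) :
    sgdoSeq hn f α x0 σ T = sgdoSeq hn f α x0 σ' T := by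
  induction T with
  | zero => rfl
  | succ T ih =>
      have hT := ih (fun t ht => h t (Nat.lt_succ_of_lt ht))
      show sgdoSeq hn f α x0 σ T - _ = sgdoSeq hn f α x0 σ' T - _
      rw [hT, h T (Nat.lt_succ_self T)]

/-- If the two selection sequences agree except possibly at one time `t0`, iterates stay
`2αG`-close. -/

lemma sgdoSeq_close (hn : 0 < n) (f : Fin n → Vec d → ℝ) (G L α : ℝ) (x0 : Vec d)
    (hLpos : 0 < L) (hα : 0 ≤ α) (hα2 : α ≤ 2 / L) (hG : 0 ≤ G)
    (hdiff : ∀ i, Differentiable ℝ (f i))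
    (hconv : ∀ i, ConvexOn ℝ Set.univ (f i))
    (hGlip : ∀ i x, ‖gradient (f i) x‖ ≤ G)
    (hLsmooth : ∀ i x y, ‖gradient (f i) x - gradient (f i) y‖ ≤ L * ‖x - y‖)
    (σ σ' : ℕ → Equiv.Perm (Fin n)) (t0 : ℕ) (T : ℕ)
    (h : ∀ t, t < T → t ≠ t0 →
      σ (t / n) ⟨t % n, Nat.mod_lt t hn⟩ = σ' (t / n) ⟨t % n, Nat.mod_lt t hn⟩) :
    ‖sgdoSeq hn f α x0 σ T - sgdoSeq hn f α x0 σ' T‖ ≤ 2 * α * G := by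
  induction T with
  | zero =>
      show ‖x0 - x0‖ ≤ 2 * α * G
      simp
      positivity
  | succ T ih =>
      rcases lt_trichotomy T t0 with hlt | heq | hgt
      · -- all selections up to T+1 agree
        have : sgdoSeq hn f α x0 σ (T+1) = sgdoSeq hn f α x0 σ' (T+1) := by
          apply sgdoSeq_congr
          intro t ht
          exact h t ht (by omega)
        rw [this]; simp; positivity
      · -- divergence step
        have hxeq : sgdoSeq hn f α x0 σ T = sgdoSeq hn f α x0 σ' T := by
          apply sgdoSeq_congr
          intro t ht
          exact h t (Nat.lt_succ_of_lt ht) (by omega)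
        show ‖(sgdoSeq hn f α x0 σ T - α • _) - (sgdoSeq hn f α x0 σ' T - α • _)‖ ≤ 2 * α * G
        rw [← hxeq]
        set x := sgdoSeq hn f α x0 σ T
        have : (x - α • gradient (f (σ (T / n) ⟨T % n, Nat.mod_lt T hn⟩)) x)
            - (x - α • gradient (f (σ' (T / n) ⟨T % n, Nat.mod_lt T hn⟩)) x)
            = α • (gradient (f (σ' (T / n) ⟨T % n, Nat.mod_lt T hn⟩)) x
                - gradient (f (σ (T / n) ⟨T % n, Nat.mod_lt T hn⟩)) x) := by
          rw [smul_sub]; abel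
        rw [this, norm_smul, Real.norm_eq_abs, abs_of_nonneg hα]
        have hb : ‖gradient (f (σ' (T / n) ⟨T % n, Nat.mod_lt T hn⟩)) x
            - gradient (f (σ (T / n) ⟨T % n, Nat.mod_lt T hn⟩)) x‖ ≤ 2 * G := by
          calc _ ≤ ‖gradient (f (σ' (T / n) ⟨T % n, Nat.mod_lt T hn⟩)) x‖
                + ‖gradient (f (σ (T / n) ⟨T % n, Nat.mod_lt T hn⟩)) x‖ := norm_sub_le _ _
            _ ≤ G + G := add_le_add (hGlip _ _) (hGlip _ _)
            _ = 2 * G := by ring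
        calc α * ‖_‖ ≤ α * (2 * G) := mul_le_mul_of_nonneg_left hb hα
          _ = 2 * α * G := by ring
      · -- nonexpansive step
        have hsel : σ (T / n) ⟨T % n, Nat.mod_lt T hn⟩ = σ' (T / n) ⟨T % n, Nat.mod_lt T hn⟩ :=
          h T (Nat.lt_succ_self T) (by omega)
        have ihT := ih (fun t ht hne => h t (Nat.lt_succ_of_lt ht) hne)
        show ‖(sgdoSeq hn f α x0 σ T - α • _) - (sgdoSeq hn f α x0 σ' T - α • _)‖ ≤ 2 * α * G
        rw [hsel]
        set c := σ' (T / n) ⟨T % n, Nat.mod_lt T hn⟩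
        calc ‖(sgdoSeq hn f α x0 σ T - α • gradient (f c) (sgdoSeq hn f α x0 σ T))
              - (sgdoSeq hn f α x0 σ' T - α • gradient (f c) (sgdoSeq hn f α x0 σ' T))‖
            ≤ ‖sgdoSeq hn f α x0 σ T - sgdoSeq hn f α x0 σ' T‖ :=
              step_nonexpansive (f c) L α hLpos hα hα2 (hdiff c) (hconv c) (hLsmooth c) _ _
          _ ≤ 2 * α * G := ihT

lemma inner_diff_bound {d : ℕ} (A B y y' xs : Vec d) (L α G : ℝ)
    (hL0 : 0 ≤ L) (hα : 0 ≤ α) (hG : 0 ≤ G)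
    (hd : ‖y - y'‖ ≤ 2 * α * G) (hAB : ‖A - B‖ ≤ L * ‖y - y'‖) (hB : ‖B‖ ≤ G) :
    ⟪A, y - xs⟫ - ⟪B, y' - xs⟫ ≤ 2 * L * α * G * ‖y - xs‖ + 2 * α * G ^ 2 := by
  have h1 : ⟪A, y - xs⟫ - ⟪B, y' - xs⟫ = ⟪A - B, y - xs⟫ + ⟪B, y - y'⟫ := by
    have he : y - y' = (y - xs) - (y' - xs) := by abel
    rw [inner_sub_left, he]
    simp only [inner_sub_left, inner_sub_right]
    ring
  rw [h1]
  have h2 : ⟪A - B, y - xs⟫ ≤ (L * (2 * α * G)) * ‖y - xs‖ := by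
    calc ⟪A - B, y - xs⟫ ≤ ‖A - B‖ * ‖y - xs‖ := real_inner_le_norm _ _
      _ ≤ (L * (2 * α * G)) * ‖y - xs‖ :=
          mul_le_mul_of_nonneg_right (hAB.trans (mul_le_mul_of_nonneg_left hd hL0))
            (norm_nonneg _)
  have h3 : ⟪B, y - y'⟫ ≤ G * (2 * α * G) := by
    calc ⟪B, y - y'⟫ ≤ ‖B‖ * ‖y - y'‖ := real_inner_le_norm _ _
      _ ≤ G * (2 * α * G) := mul_le_mul hB hd (norm_nonneg _) hG
  have e1 : (L * (2 * α * G)) * ‖y - xs‖ = 2 * L * α * G * ‖y - xs‖ := by ring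
  have e2 : G * (2 * α * G) = 2 * α * G ^ 2 := by ring
  linarith

lemma amgm_bound (L α G μ t : ℝ) (hμ : 0 < μ) (ht : 0 ≤ t) :
    2 * L * α * G * t ≤ 4 * L ^ 2 * G ^ 2 * α ^ 2 / μ + μ / 4 * t ^ 2 := by
  have key : μ * (4 * L ^ 2 * G ^ 2 * α ^ 2 / μ + μ / 4 * t ^ 2 - 2 * L * α * G * t)
      = (2 * L * α * G - μ * t / 2) ^ 2 := by
    field_simp
    ring
  have h2 : 0 ≤ μ * (4 * L ^ 2 * G ^ 2 * α ^ 2 / μ + μ / 4 * t ^ 2 - 2 * L * α * G * t) := by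
    rw [key]; exact sq_nonneg _
  nlinarith [h2, hμ]

end AuxLemmas

/-- **Bound on `R_(i,k)`.** If `μ > 0` and `α ≤ 2/L`, then
`E[R_(i,k)] ≤ 4L²G²α²/μ + (μ/4)E[‖x_i^k − x*‖²] + 2αG²`, where
`R_(i,k) = ⟨∇F(x_i^k) − ∇f(x_i^k; σ_k(i+1)), x_i^k − x*⟩`. -/
theorem remainder_term_bound
    (d n K : ℕ) (hn : 0 < n) (hK : 0 < K)
    (f : Fin n → Vec d → ℝ) (G L μ α : ℝ) (x0 xstar : Vec d)
    (hμ : 0 < μ) (hα : 0 < α) (hα2 : α ≤ 2 / L)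
    (hdiff : ∀ i, Differentiable ℝ (f i))
    (hconv : ∀ i, ConvexOn ℝ Set.univ (f i))
    (hGlip : ∀ i x, ‖gradient (f i) x‖ ≤ G)
    (hLsmooth : ∀ i x y, ‖gradient (f i) x - gradient (f i) y‖ ≤ L * ‖x - y‖)
    (hmin : ∀ y, avgF f xstar ≤ avgF f y)
    (k : ℕ) (hk1 : 1 ≤ k) (hkK : k ≤ K) (i : Fin n) :
    unifExp (fun ω : Fin K → Equiv.Perm (Fin n) =>
        ⟪gradient (avgF f) (sgdoIter hn f α x0 (extendPerm ω) k (i : ℕ))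
            - gradient (f (extendPerm ω (k - 1) i)) (sgdoIter hn f α x0 (extendPerm ω) k (i : ℕ)),
          sgdoIter hn f α x0 (extendPerm ω) k (i : ℕ) - xstar⟫)
      ≤ 4 * L ^ 2 * G ^ 2 * α ^ 2 / μ
        + μ / 4 * unifExp (fun ω : Fin K → Equiv.Perm (Fin n) => ‖sgdoIter hn f α x0 (extendPerm ω) k (i : ℕ) - xstar‖ ^ 2)
        + 2 * α * G ^ 2 := by
  classical
  -- basic positivity facts
  have hL : 0 < L := by
    by_contra hneg
    push_neg at hneg
    have h20 : (2 : ℝ) / L ≤ 0 := by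
      rcases lt_or_eq_of_le hneg with h' | h'
      · exact le_of_lt (div_neg_of_pos_of_neg two_pos h')
      · rw [h']; simp
    linarith
  have hG : 0 ≤ G := le_trans (norm_nonneg _) (hGlip i x0)
  have hα0 : 0 ≤ α := hα.le
  have hkk : k - 1 < K := by omega
  set Ω := (Fin K → Equiv.Perm (Fin n)) with hΩ
  set kk : Fin K := ⟨k - 1, hkk⟩ with hkkdef
  -- the coupling maps
  set Φ : Fin n → Ω → Ω := fun p ω => Function.update ω kk (ω kk * Equiv.swap p i) with hΦ
  have hΦinv : ∀ p, Function.Involutive (Φ p) := by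
    intro p ω
    funext j
    by_cases hj : j = kk
    · subst hj
      simp only [hΦ, Function.update_self]
      rw [mul_assoc, Equiv.swap_mul_self, mul_one]
    · simp only [hΦ, Function.update_of_ne hj]
  -- extendPerm facts
  have hE1 : ∀ (p : Fin n) (ω : Ω) (j : ℕ), j ≠ k - 1 →
      extendPerm (Φ p ω) j = extendPerm ω j := by
    intro p ω j hj
    unfold extendPerm
    by_cases h : j < K
    · rw [dif_pos h, dif_pos h]
      have : (⟨j, h⟩ : Fin K) ≠ kk := by
        simp only [hkkdef, ne_eq, Fin.mk.injEq]
        exact hj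
      simp only [hΦ, Function.update_of_ne this]
    · rw [dif_neg h, dif_neg h]
  have hE2 : ∀ (p : Fin n) (ω : Ω),
      extendPerm (Φ p ω) (k - 1) = ω kk * Equiv.swap p i := by
    intro p ω
    unfold extendPerm
    rw [dif_pos hkk]
    simp only [hΦ]
    have : (⟨k - 1, hkk⟩ : Fin K) = kk := rfl
    rw [this, Function.update_self]
  have hE3 : ∀ ω : Ω, extendPerm ω (k - 1) = ω kk := by
    intro ω
    unfold extendPerm
    rw [dif_pos hkk]
  -- the iterate
  set Y : Ω → Vec d := fun ω => sgdoSeq hn f α x0 (extendPerm ω) ((k - 1) * n + (i : ℕ))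
    with hY
  have hYdef : ∀ ω : Ω, sgdoIter hn f α x0 (extendPerm ω) k (i : ℕ) = Y ω := fun ω => rfl
  -- closeness of coupled trajectories
  have Hclose : ∀ (p : Fin n) (ω : Ω), ‖Y ω - Y (Φ p ω)‖ ≤ 2 * α * G := by
    intro p ω
    apply sgdoSeq_close hn f G L α x0 hL hα0 hα2 hG hdiff hconv hGlip hLsmooth
      (extendPerm ω) (extendPerm (Φ p ω)) ((k - 1) * n + min (p : ℕ) (i : ℕ))
    intro t ht hne
    rcases lt_or_ge t ((k - 1) * n) with hcase | hcase
    · have hdivlt : t / n < k - 1 := (Nat.div_lt_iff_lt_mul hn).mpr hcase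
      rw [hE1 p ω (t / n) (by omega)]
    · have hdiv : t / n = k - 1 := by
        have h1 : (k - 1) * n ≤ t := hcase
        have h2 : t < (k - 1 + 1) * n := by
          have := i.isLt
          calc t < (k - 1) * n + (i : ℕ) := ht
            _ ≤ (k - 1) * n + n := by omega
            _ = (k - 1 + 1) * n := by ring
        exact Nat.div_eq_of_lt_le h1 h2
      have hmod : t % n = t - (k - 1) * n := by
        have hdm := Nat.div_add_mod t n
        rw [hdiv] at hdm
        have hdm' : (k - 1) * n + t % n = t := by rw [Nat.mul_comm]; exact hdm
        omega
      have hji : t % n < (i : ℕ) := by omega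
      rw [hdiv, hE3 ω, hE2 p ω, Equiv.Perm.mul_apply]
      congr 1
      have h1 : (⟨t % n, Nat.mod_lt t hn⟩ : Fin n) ≠ p := by
        intro hcontra
        have hh' : t % n = (p : ℕ) := congrArg Fin.val hcontra
        exact hne (by omega)
      have h2 : (⟨t % n, Nat.mod_lt t hn⟩ : Fin n) ≠ i := by
        intro hcontra
        have hh' : t % n = (i : ℕ) := congrArg Fin.val hcontra
        omega
      rw [Equiv.swap_apply_of_ne_of_ne h1 h2]
  -- rewrite goal in terms of Y
  simp only [hYdef]
  have hn0 : (n : ℝ) ≠ 0 := Nat.cast_ne_zero.mpr hn.ne'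
  have hcard0 : (0 : ℝ) < (Fintype.card Ω : ℝ) := by exact_mod_cast Fintype.card_pos
  -- change of variables identity
  have key : ∀ p : Fin n,
      (∑ ω : Ω, ⟪gradient (f (extendPerm ω (k - 1) i)) (Y ω), Y ω - xstar⟫)
      = ∑ ω : Ω, ⟪gradient (f (ω kk p)) (Y (Φ p ω)), Y (Φ p ω) - xstar⟫ := by
    intro p
    have hb := Fintype.sum_bijective (Φ p) ((hΦinv p).bijective)
      (fun ω => ⟪gradient (f (extendPerm (Φ p ω) (k - 1) i)) (Y (Φ p ω)), Y (Φ p ω) - xstar⟫)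
      (fun ω => ⟪gradient (f (extendPerm ω (k - 1) i)) (Y ω), Y ω - xstar⟫)
      (fun ω => rfl)
    rw [← hb]
    apply Finset.sum_congr rfl
    intro ω _
    simp only [hE2 p, Equiv.Perm.mul_apply, Equiv.swap_apply_right]
  -- expanding the full gradient
  have hA : ∀ ω : Ω, ⟪gradient (avgF f) (Y ω), Y ω - xstar⟫
      = (n : ℝ)⁻¹ * ∑ p : Fin n, ⟪gradient (f (ω kk p)) (Y ω), Y ω - xstar⟫ := by
    intro ω
    rw [gradient_avgF f hdiff (Y ω), real_inner_smul_left, sum_inner]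
    congr 1
    exact (Equiv.sum_comp (ω kk) (fun j => ⟪gradient (f j) (Y ω), Y ω - xstar⟫)).symm
  -- the main splitting identity
  have step1 : (∑ ω : Ω, ⟪gradient (avgF f) (Y ω)
        - gradient (f (extendPerm ω (k - 1) i)) (Y ω), Y ω - xstar⟫)
      = (n : ℝ)⁻¹ * ∑ p : Fin n, ∑ ω : Ω,
          (⟪gradient (f (ω kk p)) (Y ω), Y ω - xstar⟫
            - ⟪gradient (f (ω kk p)) (Y (Φ p ω)), Y (Φ p ω) - xstar⟫) := by
    have e1 : (∑ ω : Ω, ⟪gradient (avgF f) (Y ω)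
          - gradient (f (extendPerm ω (k - 1) i)) (Y ω), Y ω - xstar⟫)
        = (∑ ω : Ω, ⟪gradient (avgF f) (Y ω), Y ω - xstar⟫)
          - ∑ ω : Ω, ⟪gradient (f (extendPerm ω (k - 1) i)) (Y ω), Y ω - xstar⟫ := by
      rw [← Finset.sum_sub_distrib]
      exact Finset.sum_congr rfl (fun ω _ => by rw [inner_sub_left])
    have e2 : (∑ ω : Ω, ⟪gradient (avgF f) (Y ω), Y ω - xstar⟫)
        = (n : ℝ)⁻¹ * ∑ p : Fin n, ∑ ω : Ω,
            ⟪gradient (f (ω kk p)) (Y ω), Y ω - xstar⟫ := by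
      rw [Finset.sum_congr rfl (fun ω _ => hA ω), ← Finset.mul_sum, Finset.sum_comm]
    have e3 : (∑ ω : Ω, ⟪gradient (f (extendPerm ω (k - 1) i)) (Y ω), Y ω - xstar⟫)
        = (n : ℝ)⁻¹ * ∑ p : Fin n, ∑ ω : Ω,
            ⟪gradient (f (ω kk p)) (Y (Φ p ω)), Y (Φ p ω) - xstar⟫ := by
      rw [Finset.sum_congr rfl (fun p _ => (key p).symm), Finset.sum_const,
        Finset.card_univ, Fintype.card_fin, nsmul_eq_mul, ← mul_assoc,
        inv_mul_cancel₀ hn0, one_mul]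
    rw [e1, e2, e3, ← mul_sub, ← Finset.sum_sub_distrib]
    congr 1
    exact Finset.sum_congr rfl (fun p _ => (Finset.sum_sub_distrib _ _).symm)
  -- pointwise bound
  have hpt : ∀ (p : Fin n) (ω : Ω),
      ⟪gradient (f (ω kk p)) (Y ω), Y ω - xstar⟫
        - ⟪gradient (f (ω kk p)) (Y (Φ p ω)), Y (Φ p ω) - xstar⟫
      ≤ 2 * L * α * G * ‖Y ω - xstar‖ + 2 * α * G ^ 2 := by
    intro p ω
    exact inner_diff_bound _ _ _ _ _ L α G hL.le hα0 hG (Hclose p ω)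
      (hLsmooth _ _ _) (hGlip _ _)
  -- sum bound
  have main : (∑ ω : Ω, ⟪gradient (avgF f) (Y ω)
        - gradient (f (extendPerm ω (k - 1) i)) (Y ω), Y ω - xstar⟫)
      ≤ ∑ ω : Ω, (4 * L ^ 2 * G ^ 2 * α ^ 2 / μ + μ / 4 * ‖Y ω - xstar‖ ^ 2
          + 2 * α * G ^ 2) := by
    rw [step1]
    have b1 : (∑ p : Fin n, ∑ ω : Ω,
          (⟪gradient (f (ω kk p)) (Y ω), Y ω - xstar⟫
            - ⟪gradient (f (ω kk p)) (Y (Φ p ω)), Y (Φ p ω) - xstar⟫))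
        ≤ ∑ p : Fin n, ∑ ω : Ω, (2 * L * α * G * ‖Y ω - xstar‖ + 2 * α * G ^ 2) :=
      Finset.sum_le_sum (fun p _ => Finset.sum_le_sum (fun ω _ => hpt p ω))
    have b2 : (n : ℝ)⁻¹ * (∑ p : Fin n, ∑ ω : Ω,
          (⟪gradient (f (ω kk p)) (Y ω), Y ω - xstar⟫
            - ⟪gradient (f (ω kk p)) (Y (Φ p ω)), Y (Φ p ω) - xstar⟫))
        ≤ (n : ℝ)⁻¹ * ∑ p : Fin n, ∑ ω : Ω, (2 * L * α * G * ‖Y ω - xstar‖ + 2 * α * G ^ 2) :=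
      mul_le_mul_of_nonneg_left b1 (by positivity)
    have b3 : (n : ℝ)⁻¹ * (∑ p : Fin n, ∑ ω : Ω,
          (2 * L * α * G * ‖Y ω - xstar‖ + 2 * α * G ^ 2))
        = ∑ ω : Ω, (2 * L * α * G * ‖Y ω - xstar‖ + 2 * α * G ^ 2) := by
      rw [Finset.sum_const, Finset.card_univ, Fintype.card_fin, nsmul_eq_mul, ← mul_assoc,
        inv_mul_cancel₀ hn0, one_mul]
    have b4 : (∑ ω : Ω, (2 * L * α * G * ‖Y ω - xstar‖ + 2 * α * G ^ 2))
        ≤ ∑ ω : Ω, (4 * L ^ 2 * G ^ 2 * α ^ 2 / μ + μ / 4 * ‖Y ω - xstar‖ ^ 2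
            + 2 * α * G ^ 2) := by
      apply Finset.sum_le_sum
      intro ω _
      have := amgm_bound L α G μ ‖Y ω - xstar‖ hμ (norm_nonneg _)
      linarith
    calc (n : ℝ)⁻¹ * _ ≤ (n : ℝ)⁻¹ * ∑ p : Fin n, ∑ ω : Ω,
          (2 * L * α * G * ‖Y ω - xstar‖ + 2 * α * G ^ 2) := b2
      _ = ∑ ω : Ω, (2 * L * α * G * ‖Y ω - xstar‖ + 2 * α * G ^ 2) := b3
      _ ≤ _ := b4
  -- conclude, dividing by the cardinality
  simp only [unifExp]
  have hfinal : (∑ ω : Ω, (4 * L ^ 2 * G ^ 2 * α ^ 2 / μ + μ / 4 * ‖Y ω - xstar‖ ^ 2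
        + 2 * α * G ^ 2)) / (Fintype.card Ω : ℝ)
      = 4 * L ^ 2 * G ^ 2 * α ^ 2 / μ
        + μ / 4 * ((∑ ω : Ω, ‖Y ω - xstar‖ ^ 2) / (Fintype.card Ω : ℝ))
        + 2 * α * G ^ 2 := by
    rw [Finset.sum_add_distrib, Finset.sum_add_distrib, Finset.sum_const, Finset.sum_const,
      ← Finset.mul_sum, Finset.card_univ, nsmul_eq_mul, nsmul_eq_mul]
    field_simp
  calc (∑ ω : Ω, ⟪gradient (avgF f) (Y ω)
        - gradient (f (extendPerm ω (k - 1) i)) (Y ω), Y ω - xstar⟫) / (Fintype.card Ω : ℝ)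
      ≤ (∑ ω : Ω, (4 * L ^ 2 * G ^ 2 * α ^ 2 / μ + μ / 4 * ‖Y ω - xstar‖ ^ 2
          + 2 * α * G ^ 2)) / (Fintype.card Ω : ℝ) := by
        exact div_le_div_of_nonneg_right main hcard0.le
    _ = _ := hfinal
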